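/- Let G = (V, E) be a finite simple graph with maximum degree bounded by d, and let (X, T) be an edge-overlapping and minimal tree decomposition of G. For every node Y of T, each subtree of T created by removing Y from T witnesses some edge of G incident to a vertex of Y that is not witnessed by any of the other subtrees created by removing Y; consequently the number of such subtrees is at most the number of edges of G incident to vertices of Y. -/

import Mathlib

/-!
Fix a node `i`, a neighbour `j` of it, and by edge-overlap a vertex `x ∈ X_i ∩ X_j`. In the
subtree of nodes containing `x`, a longest path starting with the edge `ij` ends at a node `k` in
the branch of `j` that is a leaf of this subtree. Erasing `x` from `X_k` therefore keeps the
subtree connected and keeps `x` covered by `X_i`, so by minimality some edge `xy` of `G` is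
covered by `X_k` alone. Since distinct branches at `i` of a forest are disjoint, the edges found
for distinct neighbours `j` are distinct.
-/

/-- `(bags, T)` is a tree decomposition of `G`: `T` is a forest on the index set of the
family of bags; every vertex appears in some bag; every edge is contained in some bag;
and for every vertex the set of bags containing it induces a connected subgraph of `T`. -/
def IsTreeDecomposition {V : Type} {m : ℕ} (G : SimpleGraph V)
    (bags : Fin m → Finset V) (T : SimpleGraph (Fin m)) : Prop :=
  T.IsAcyclic ∧
  (∀ v : V, ∃ i, v ∈ bags i) ∧
  (∀ u v : V, G.Adj u v → ∃ i, u ∈ bags i ∧ v ∈ bags i) ∧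
  (∀ v : V, (T.induce {i : Fin m | v ∈ bags i}).Connected)

/-- `l` lies in the same connected component as `j` in the forest `T` with the node `i`
removed (i.e. in the subtree created by removing `i` that contains `j`). -/
def SameComponentAvoiding {m : ℕ} (T : SimpleGraph (Fin m)) (i j l : Fin m) : Prop :=
  ∃ (hj : j ∈ ({i}ᶜ : Set (Fin m))) (hl : l ∈ ({i}ᶜ : Set (Fin m))),
    (T.induce ({i}ᶜ : Set (Fin m))).Reachable ⟨j, hj⟩ ⟨l, hl⟩

namespace SimpleGraph

variable {α : Type*} {T : SimpleGraph α}

/-- A longest path inside `s` that starts along the edge `ij` ends at a vertex with at most one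
neighbour in `s`: any other neighbour would either extend the path or close a cycle. -/
theorem IsAcyclic.exists_leaf_beyond_adj [Fintype α] (hT : T.IsAcyclic) {s : Set α}
    {i j : α} (hij : T.Adj i j) (hj : j ∈ s) :
    ∃ k ∈ s, (∃ q : T.Walk j k, i ∉ q.support) ∧
      (T.neighborSet k ∩ s).Subsingleton := by
  classical
  let P : ℕ → Prop := fun n => ∃ (k : α) (q : T.Walk j k),
    q.IsPath ∧ (∀ v ∈ q.support, v ∈ s) ∧ i ∉ q.support ∧ q.length = n
  have hP0 : P 0 := ⟨j, .nil, .nil, by simpa using hj, by simpa using hij.ne, rfl⟩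
  obtain ⟨k, q, hq, hqs, hiq, hlen⟩ := Nat.findGreatest_spec (Nat.zero_le (Fintype.card α)) hP0
  refine ⟨k, hqs k q.end_mem_support, ⟨q, hiq⟩, ?_⟩
  have hp : (Walk.cons hij q).IsPath := hq.cons hiq
  have hpen : ∀ w ∈ T.neighborSet k ∩ s, w = (Walk.cons hij q).penultimate := by
    rintro w ⟨hkw : T.Adj k w, hws⟩
    refine hT.eq_penultimate_of_adj_end hp hkw ?_
    by_contra hw
    rw [Walk.support_cons, List.mem_cons, not_or] at hw
    have hext : (q.concat hkw).IsPath := hq.concat hw.2 hkw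
    have hexts : ∀ v ∈ (q.concat hkw).support, v ∈ s := by
      simp only [Walk.support_concat, List.mem_append, List.mem_singleton]
      rintro v (hv | rfl)
      exacts [hqs v hv, hws]
    have hlonger : P (q.length + 1) := ⟨w, q.concat hkw, hext, hexts,
      by simp [Walk.support_concat, hiq, Ne.symm hw.1], q.length_concat hkw⟩
    have := Nat.le_findGreatest (q.length_concat hkw ▸ hext.length_lt.le) hlonger
    omega
  exact fun a ha b hb => (hpen a ha).trans (hpen b hb).symm

theorem Connected.induce_diff_singleton_of_subsingleton {s : Set α} {k : α}
    (hs : (T.induce s).Connected) (hk : (T.neighborSet k ∩ s).Subsingleton)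
    (hne : (s \ {k}).Nonempty) :
    (T.induce (s \ {k})).Connected := by
  have hpre := hs.preconnected.induce_of_degree_eq_one (s := {v : s | v.1 ≠ k}) <| by
    rintro v hv a ha b hb
    replace hv : v.1 = k := not_not.mp hv
    exact Subtype.ext (hk ⟨hv ▸ ha, a.2⟩ ⟨hv ▸ hb, b.2⟩)
  let f : (T.induce s).induce {v : s | v.1 ≠ k} →g T.induce (s \ {k}) :=
    ⟨fun v => ⟨v.1.1, v.1.2, v.2⟩, id⟩
  refine (connected_iff _).mpr ⟨?_, hne.to_subtype⟩
  rintro ⟨u, hu, huk⟩ ⟨v, hv, hvk⟩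
  exact (hpre ⟨⟨u, hu⟩, huk⟩ ⟨⟨v, hv⟩, hvk⟩).map f

end SimpleGraph

open SimpleGraph

section SameComponentAvoiding

variable {m : ℕ} {T : SimpleGraph (Fin m)} {i j j' l : Fin m}

theorem sameComponentAvoiding_iff_exists_walk :
    SameComponentAvoiding T i j l ↔ ∃ q : T.Walk j l, i ∉ q.support := by
  constructor
  · rintro ⟨_, _, ⟨q⟩⟩
    refine ⟨q.map (Embedding.induce _).toHom, fun hi => ?_⟩
    obtain ⟨v, -, hv⟩ := List.mem_map.mp (Walk.support_map _ q ▸ hi)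
    exact v.2 hv
  · rintro ⟨q, hq⟩
    exact ⟨_, _, ⟨q.induce {i}ᶜ fun v hv h => hq (h ▸ hv)⟩⟩

/-- Otherwise the walk `j ⟶ l ⟶ j' ⟶ i` would avoid the bridge `ji`. -/
theorem SimpleGraph.IsAcyclic.eq_of_sameComponentAvoiding (hT : T.IsAcyclic) (hj : T.Adj i j)
    (hj' : T.Adj i j') (hl : SameComponentAvoiding T i j l)
    (hl' : SameComponentAvoiding T i j' l) : j = j' := by
  obtain ⟨q, hq⟩ := sameComponentAvoiding_iff_exists_walk.mp hl
  obtain ⟨q', hq'⟩ := sameComponentAvoiding_iff_exists_walk.mp hl'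
  have hbridge := isAcyclic_iff_forall_adj_isBridge.mp hT hj.symm
  have hmem := isBridge_iff_forall_walk_mem_edges.mp hbridge
    ((q.append q'.reverse).concat hj'.symm)
  rw [Walk.edges_concat, List.concat_eq_append, List.mem_append, List.mem_singleton] at hmem
  rcases hmem with hmem | hmem
  · refine absurd ((q.append q'.reverse).snd_mem_support_of_mem_edges hmem) ?_
    simp [Walk.mem_support_append_iff, hq, hq']
  · exact Sym2.congr_left.mp hmem

end SameComponentAvoiding

namespace IsTreeDecomposition

variable {V : Type} [DecidableEq V] {m : ℕ} {G : SimpleGraph V} {bags : Fin m → Finset V}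
  {T : SimpleGraph (Fin m)} {k l : Fin m} {v x : V}

theorem mem_update_erase :
    v ∈ Function.update bags k ((bags k).erase x) l ↔ v ∈ bags l ∧ (l = k → v ≠ x) := by
  by_cases hlk : l = k
  · subst hlk; simp [and_comm]
  · simp [hlk]

theorem update_erase (htd : IsTreeDecomposition G bags T)
    (hconn : (T.induce ({l | x ∈ bags l} \ {k})).Connected)
    (hedge : ∀ y, G.Adj x y → ∃ l ≠ k, x ∈ bags l ∧ y ∈ bags l) :
    IsTreeDecomposition G (Function.update bags k ((bags k).erase x)) T := by
  obtain ⟨hT, hcover, hcovers, hsub⟩ := htd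
  refine ⟨hT, fun v => ?_, fun u v huv => ?_, fun v => ?_⟩
  · by_cases hvx : v = x
    · obtain ⟨l, ⟨hxl, hlk⟩⟩ := hconn.nonempty
      exact ⟨l, mem_update_erase.mpr ⟨hvx ▸ hxl, fun h => absurd h hlk⟩⟩
    · obtain ⟨l, hl⟩ := hcover v
      exact ⟨l, mem_update_erase.mpr ⟨hl, fun _ => hvx⟩⟩
  · simp only [mem_update_erase]
    by_cases hux : u = x
    · obtain ⟨l, hlk, hl⟩ := hedge v (hux ▸ huv)
      exact ⟨l, by grind⟩
    by_cases hvx : v = x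
    · obtain ⟨l, hlk, hl⟩ := hedge u (hvx ▸ huv.symm)
      exact ⟨l, by grind⟩
    obtain ⟨l, hl⟩ := hcovers u v huv
    exact ⟨l, by grind⟩
  · by_cases hvx : v = x
    · have hset : {l | v ∈ Function.update bags k ((bags k).erase x) l} =
          {l | x ∈ bags l} \ {k} := by
        ext l
        simp [mem_update_erase, hvx]
      rwa [hset]
    · have hset :
          {l | v ∈ Function.update bags k ((bags k).erase x) l} = {l | v ∈ bags l} := by
        ext l
        simp [mem_update_erase, hvx]
      rw [hset]
      exact hsub v

theorem exists_adj_sole_bag (htd : IsTreeDecomposition G bags T)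
    (hconn : (T.induce ({l | x ∈ bags l} \ {k})).Connected)
    (hmin : ¬ IsTreeDecomposition G (Function.update bags k ((bags k).erase x)) T) :
    ∃ y, G.Adj x y ∧ ∀ l, x ∈ bags l ∧ y ∈ bags l ↔ l = k := by
  have : ¬ ∀ y, G.Adj x y → ∃ l ≠ k, x ∈ bags l ∧ y ∈ bags l :=
    fun hedge => hmin (htd.update_erase hconn hedge)
  push Not at this
  obtain ⟨y, hxy, hsole⟩ := this
  refine ⟨y, hxy, fun l => ⟨fun hl => by_contra fun hlk => hsole l hlk hl.1 hl.2, ?_⟩⟩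
  rintro rfl
  obtain ⟨l', hl'⟩ := htd.2.2.1 x y hxy
  rcases eq_or_ne l' l with rfl | hne
  · exact hl'
  · exact absurd hl'.2 (hsole l' hne hl'.1)

theorem exists_edge_sole_bag_in_branch (htd : IsTreeDecomposition G bags T)
    (hminimal : ∀ k, ∀ x ∈ bags k,
      ¬ IsTreeDecomposition G (Function.update bags k ((bags k).erase x)) T)
    {i j : Fin m} (hij : T.Adj i j) (hoverlap : ((bags i : Set V) ∩ (bags j : Set V)).Nonempty) :
    ∃ e ∈ G.edgeSet, (∃ x ∈ bags i, x ∈ e) ∧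
      ∃ k, SameComponentAvoiding T i j k ∧ ∀ l, (∀ z ∈ e, z ∈ bags l) ↔ l = k := by
  obtain ⟨x, hxi, hxj⟩ := hoverlap
  obtain ⟨k, hxk, ⟨q, hiq⟩, hleaf⟩ :=
    htd.1.exists_leaf_beyond_adj (s := {l | x ∈ bags l}) hij hxj
  have hki : k ≠ i := fun h => hiq (h ▸ q.end_mem_support)
  have hconn := (htd.2.2.2 x).induce_diff_singleton_of_subsingleton hleaf ⟨i, hxi, hki.symm⟩
  obtain ⟨y, hxy, hsole⟩ := htd.exists_adj_sole_bag hconn (hminimal k x hxk)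
  exact ⟨s(x, y), hxy, ⟨x, hxi, Sym2.mem_mk_left x y⟩, k,
    sameComponentAvoiding_iff_exists_walk.mpr ⟨q, hiq⟩, by simpa using hsole⟩

end IsTreeDecomposition

theorem minimal_decomposition_unique_witness_general {V : Type} [Fintype V] [DecidableEq V]
    (G : SimpleGraph V)
    (m : ℕ) (bags : Fin m → Finset V) (T : SimpleGraph (Fin m))
    (htd : IsTreeDecomposition G bags T)
    (hoverlap : ∀ i j : Fin m, T.Adj i j → ((bags i : Set V) ∩ (bags j : Set V)).Nonempty)
    (hminimal : ∀ i : Fin m, ∀ x ∈ bags i,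
      ¬ IsTreeDecomposition G (Function.update bags i ((bags i).erase x)) T) :
    ∀ i : Fin m, ∃ e : T.neighborSet i → Sym2 V,
      Function.Injective e ∧
      (∀ j : T.neighborSet i,
        e j ∈ G.edgeSet ∧
        (∃ x ∈ bags i, x ∈ e j) ∧
        (∃ l : Fin m, SameComponentAvoiding T i (j : Fin m) l ∧ ∀ x ∈ e j, x ∈ bags l) ∧
        (∀ l : Fin m, l ≠ i → ¬ SameComponentAvoiding T i (j : Fin m) l →
          ¬ ∀ x ∈ e j, x ∈ bags l)) ∧
      (T.neighborSet i).ncard ≤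
        {e' : Sym2 V | e' ∈ G.edgeSet ∧ ∃ x ∈ bags i, x ∈ e'}.ncard := by
  intro i
  choose e he hinc k hk hsole using fun j : T.neighborSet i =>
    htd.exists_edge_sole_bag_in_branch hminimal j.2 (hoverlap i j j.2)
  have hinj : Function.Injective e := by
    intro j j' hjj'
    have hkk : k j = k j' := (hsole j' (k j)).mp (hjj' ▸ (hsole j (k j)).mpr rfl)
    exact Subtype.ext (htd.1.eq_of_sameComponentAvoiding j.2 j'.2 (hk j) (hkk ▸ hk j'))
  refine ⟨e, hinj, fun j => ⟨he j, hinc j, ⟨k j, hk j, (hsole j _).mpr rfl⟩,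
    fun l _ hl hcov => hl ((hsole j l).mp hcov ▸ hk j)⟩, ?_⟩
  rw [← Nat.card_coe_set_eq, ← Nat.card_coe_set_eq]
  exact Nat.card_le_card_of_injective (fun j => ⟨e j, he j, hinc j⟩)
    fun j j' h => hinj (congrArg Subtype.val h)

/-- the counting argument in Lemma 5 of the paper: for an
edge-overlapping and minimal tree decomposition `(bags, T)` of a graph `G` of maximum
degree at most `d`, and any node `i`, each subtree created by removing `i` from `T`
(parameterized by the neighbor `j` of `i` it contains; in a forest distinct neighbors lie
in distinct subtrees) witnesses some edge of `G` incident to a vertex of `bags i` that is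
witnessed by no node outside that subtree (other than possibly `i` itself); the assignment
of edges to subtrees is injective, so the number of such subtrees is at most the number of
edges of `G` incident to vertices of `bags i`. -/
theorem minimal_decomposition_unique_witness {V : Type} [Fintype V] [DecidableEq V]
    (G : SimpleGraph V) (d : ℕ) (hdeg : ∀ v : V, (G.neighborSet v).ncard ≤ d)
    (m : ℕ) (bags : Fin m → Finset V) (T : SimpleGraph (Fin m))
    (htd : IsTreeDecomposition G bags T)
    (hoverlap : ∀ i j : Fin m, T.Adj i j → ((bags i : Set V) ∩ (bags j : Set V)).Nonempty)
    (hminimal : ∀ i : Fin m, ∀ x ∈ bags i,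
      ¬ IsTreeDecomposition G (Function.update bags i ((bags i).erase x)) T) :
    ∀ i : Fin m, ∃ e : T.neighborSet i → Sym2 V,
      Function.Injective e ∧
      (∀ j : T.neighborSet i,
        e j ∈ G.edgeSet ∧
        (∃ x ∈ bags i, x ∈ e j) ∧
        (∃ l : Fin m, SameComponentAvoiding T i (j : Fin m) l ∧ ∀ x ∈ e j, x ∈ bags l) ∧
        (∀ l : Fin m, l ≠ i → ¬ SameComponentAvoiding T i (j : Fin m) l →
          ¬ ∀ x ∈ e j, x ∈ bags l)) ∧
      (T.neighborSet i).ncard ≤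
        {e' : Sym2 V | e' ∈ G.edgeSet ∧ ∃ x ∈ bags i, x ∈ e'}.ncard :=
  minimal_decomposition_unique_witness_general G m bags T htd hoverlap hminimal
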